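/- arXiv:2004.01858 — 5 statements merged into one kernel-verified Lean document; each statement's English description precedes it below -/
import Mathlib

section
/- Mixed-integer encoding of the piecewise lane-centering barrier constraint (LC-CBF): For all real numbers A, B, and w, the following are equivalent: (1) there exist real numbers s₁ ≥ 0 and s₂ ≥ 0 with s₁ = 0 or s₂ = 0 (SOS-1 constraint on {s₁, s₂}), such that A − w + s₁ ≥ 0, w + s₁ ≥ 0, B + w + s₂ ≥ 0, and −w + s₂ > 0; (2) the piecewise condition holds: if w ≥ 0 then A − w ≥ 0, and if w < 0 then B + w ≥ 0. -/
/-! The SOS-1 condition selects which slack is active. With `s₁ = 0` the constraints reduce to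
`0 ≤ w ≤ A`, and with `s₂ = 0` to `-B ≤ w < 0`, because the active slack can always be taken
large enough to satisfy its two remaining constraints. These two branches are exactly the
piecewise condition. -/

open Filter in
theorem Real.exists_nonneg_ge_gt (a b : ℝ) : ∃ s : ℝ, 0 ≤ s ∧ a ≤ s ∧ b < s :=
  ((eventually_ge_atTop 0).and ((eventually_ge_atTop a).and (eventually_gt_atTop b))).exists

/-- Mixed-integer encoding of the piecewise lane-centering barrier constraint
(LC-CBF): the mixed-integer constraints with SOS-1 slack variables `s₁, s₂` are
equivalent to the piecewise condition `w ≥ 0 → A - w ≥ 0` and `w < 0 → B + w ≥ 0`. -/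
theorem lc_cbf_mixed_integer_encoding (A B w : ℝ) :
    (∃ s₁ s₂ : ℝ, 0 ≤ s₁ ∧ 0 ≤ s₂ ∧ (s₁ = 0 ∨ s₂ = 0) ∧
      A - w + s₁ ≥ 0 ∧ w + s₁ ≥ 0 ∧ B + w + s₂ ≥ 0 ∧ -w + s₂ > 0) ↔
    ((w ≥ 0 → A - w ≥ 0) ∧ (w < 0 → B + w ≥ 0)) := by
  constructor
  · rintro ⟨s₁, s₂, -, -, rfl | rfl, hA, hw₁, hB, hw₂⟩ <;> constructor <;> intro hw <;> linarith
  · rintro ⟨hA, hB⟩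
    rcases le_or_gt 0 w with hw | hw
    · obtain ⟨s₂, hs₂, hBs, hws⟩ := Real.exists_nonneg_ge_gt (-(B + w)) w
      exact ⟨0, s₂, le_rfl, hs₂, .inl rfl, by linarith [hA hw], by linarith, by linarith,
        by linarith⟩
    · obtain ⟨s₁, hs₁, hAs, hws⟩ := Real.exists_nonneg_ge_gt (w - A) (-w)
      exact ⟨s₁, 0, hs₁, le_rfl, .inr rfl, by linarith, by linarith, by linarith [hB hw],
        by linarith⟩
end

section
/- Equivalence between the stopping-distance inequality and nonnegativity of the lane-keeping barrier function: Let a_max > 0, t_s > 0, and let y, v, y_max be real numbers. Then sgn(v)·y + v²/(2·a_max) + (1/2)·|v|·t_s ≤ y_max holds if and only if √(2·a_max·(y_max − sgn(v)·y) + (1/4)·a_max²·t_s²) − |v| − (1/2)·a_max·t_s ≥ 0, where sgn denotes the sign function (sgn(v) = 1 for v > 0, 0 for v = 0, −1 for v < 0) and √ denotes the real square root, defined as 0 on negative arguments. -/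
/-!
Completing the square: with `w = |v|`, multiplying the stopping-distance inequality by `2 a_max`
turns it into `(w + a_max t_s / 2)² ≤ 2 a_max (y_max - sgn(v) y) + a_max² t_s² / 4`, and since
`w + a_max t_s / 2 ≥ 0` this is the same as `w + a_max t_s / 2` being at most the square root.
-/

theorem add_sq_div_add_mul_le_iff_sq_le {a : ℝ} (ha : 0 < a) (p w t m : ℝ) :
    p + w ^ 2 / (2 * a) + 1 / 2 * w * t ≤ m ↔
      (w + 1 / 2 * a * t) ^ 2 ≤ 2 * a * (m - p) + 1 / 4 * a ^ 2 * t ^ 2 := by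
  have hgap : 2 * a * (m - p) + 1 / 4 * a ^ 2 * t ^ 2 - (w + 1 / 2 * a * t) ^ 2 =
      2 * a * (m - (p + w ^ 2 / (2 * a) + 1 / 2 * w * t)) := by
    field_simp
    ring
  rw [← sub_nonneg (b := (w + 1 / 2 * a * t) ^ 2), hgap,
    mul_nonneg_iff_of_pos_left (by positivity), sub_nonneg]

/-- Equivalence between the stopping-distance inequality and nonnegativity of
the lane-keeping barrier function `h_LK`. -/
theorem stopping_distance_iff_hLK_nonneg
    (amax ts y v ymax : ℝ) (hamax : 0 < amax) (hts : 0 < ts) :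
    Real.sign v * y + v ^ 2 / (2 * amax) + (1 / 2) * |v| * ts ≤ ymax ↔
      Real.sqrt (2 * amax * (ymax - Real.sign v * y) + (1 / 4) * amax ^ 2 * ts ^ 2)
        - |v| - (1 / 2) * amax * ts ≥ 0 := by
  rw [ge_iff_le, sub_sub, sub_nonneg, Real.le_sqrt' (by positivity), ← sq_abs v]
  exact add_sq_div_add_mul_le_iff_sq_le hamax _ _ _ _
end

section
/- Stopping displacement under maximal deceleration: Let a > 0, t_s > 0, v ∈ ℝ, and T ∈ ℕ, and assume |v| = a·t_s·T. Then the total displacement accumulated while decelerating at the maximal rate, namely ∑_{k=0}^{T−1} (v − sgn(v)·a·t_s·k)·t_s, equals v·t_s·T − (1/2)·sgn(v)·t_s²·a·(T² − T), and this quantity equals (1/2)·(v·|v|/a) + (1/2)·v·t_s. Here sgn denotes the sign function (sgn(v) = 1 for v > 0, 0 for v = 0, −1 for v < 0). -/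
/-! Since `sgn v · |v| = v`, the hypothesis `|v| = a t_s T` reads `sgn v · a t_s T = v`. The
displacement is an arithmetic series, summed by Gauss' formula `∑_{k<T} k = (T² - T)/2`; substituting
`sgn v · a t_s T = v` and `v |v| / a = v t_s T` into the closed form gives the stopping distance. -/

namespace Real

theorem sign_mul_abs (r : ℝ) : sign r * |r| = r := by
  rcases lt_trichotomy r 0 with hr | rfl | hr
  · rw [sign_of_neg hr, abs_of_neg hr, neg_one_mul, neg_neg]
  · rw [abs_zero, mul_zero]
  · rw [sign_of_pos hr, abs_of_pos hr, one_mul]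

end Real

section Field

variable {K : Type*} [Field K] [CharZero K]

theorem Finset.sum_range_natCast (n : ℕ) :
    ∑ k ∈ Finset.range n, (k : K) = ((n : K) ^ 2 - n) / 2 := by
  induction n with
  | zero => simp
  | succ n ih => rw [Finset.sum_range_succ, ih]; push_cast; ring

theorem Finset.sum_range_arithmetic_mul (v c t : K) (n : ℕ) :
    ∑ k ∈ Finset.range n, (v - c * k) * t = v * t * n - c * t * (((n : K) ^ 2 - n) / 2) := by
  simp only [sub_mul, Finset.sum_sub_distrib, Finset.sum_const, Finset.card_range, nsmul_eq_mul,
    mul_right_comm c, ← Finset.mul_sum, Finset.sum_range_natCast]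
  ring

end Field

theorem mul_abs_div_of_abs_eq_mul {v a c : ℝ} (h : |v| = a * c) : v * |v| / a = v * c := by
  rcases eq_or_ne a 0 with rfl | ha
  · have hv : v = 0 := abs_eq_zero.mp (by rw [h, zero_mul])
    simp [hv]
  · rw [h, mul_div_assoc, mul_div_cancel_left₀ c ha]

theorem stopping_displacement_identity_general
    (a ts v : ℝ) (T : ℕ)
    (hT : |v| = a * ts * (T : ℝ)) :
    (∑ k ∈ Finset.range T, (v - Real.sign v * a * ts * (k : ℝ)) * ts)
        = v * ts * (T : ℝ) - (1 / 2) * Real.sign v * ts ^ 2 * a * ((T : ℝ) ^ 2 - (T : ℝ)) ∧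
      v * ts * (T : ℝ) - (1 / 2) * Real.sign v * ts ^ 2 * a * ((T : ℝ) ^ 2 - (T : ℝ))
        = (1 / 2) * (v * |v| / a) + (1 / 2) * v * ts := by
  have hsign : Real.sign v * (a * ts * T) = v := hT ▸ Real.sign_mul_abs v
  have hdiv : v * |v| / a = v * (ts * T) := mul_abs_div_of_abs_eq_mul (by rw [hT, mul_assoc])
  refine ⟨?_, ?_⟩
  · rw [Finset.sum_range_arithmetic_mul]
    ring
  · rw [hdiv]
    linear_combination (-(1 / 2) * ts * T + 1 / 2 * ts) * hsign

/-- Stopping displacement under maximal deceleration: with `|v| = a * ts * T`,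
the displacement `∑_{k=0}^{T-1} (v - sgn(v) * a * ts * k) * ts` equals
`v * ts * T - (1/2) * sgn(v) * ts^2 * a * (T^2 - T)`, which in turn equals
`(1/2) * (v * |v| / a) + (1/2) * v * ts`. -/
theorem stopping_displacement_identity
    (a ts v : ℝ) (T : ℕ) (ha : 0 < a) (hts : 0 < ts)
    (hT : |v| = a * ts * (T : ℝ)) :
    (∑ k ∈ Finset.range T, (v - Real.sign v * a * ts * (k : ℝ)) * ts)
        = v * ts * (T : ℝ) - (1 / 2) * Real.sign v * ts ^ 2 * a * ((T : ℝ) ^ 2 - (T : ℝ)) ∧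
      v * ts * (T : ℝ) - (1 / 2) * Real.sign v * ts ^ 2 * a * ((T : ℝ) ^ 2 - (T : ℝ))
        = (1 / 2) * (v * |v| / a) + (1 / 2) * v * ts :=
  stopping_displacement_identity_general a ts v T hT
end

section
/- One-step controlled invariance of the lane-keeping barrier for the discrete double integrator: Let a_max > 0, t_s > 0, and y_max ≥ 0, and define h(y, v) = √(2·a_max·(y_max − sgn(v)·y) + (1/4)·a_max²·t_s²) − |v| − (1/2)·a_max·t_s, where sgn is the sign function and √ is the real square root (0 on negative arguments). If h(y, v) ≥ 0, then there exists a real number acc with |acc| ≤ a_max such that h(y + t_s·v, v + t_s·acc) ≥ 0. -/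
/-- The lane-keeping discrete-time control barrier function. -/
noncomputable def hLK (amax ts ymax y v : ℝ) : ℝ :=
  Real.sqrt (2 * amax * (ymax - Real.sign v * y) + (1 / 4) * amax ^ 2 * ts ^ 2)
    - |v| - (1 / 2) * amax * ts

/-!
If the vehicle is slow enough, `|v| ≤ ts * amax`, one admissible step stops it, and at zero
velocity the barrier is nonnegative as soon as `ymax ≥ 0`. Otherwise full braking keeps the sign
of the velocity, and for `v > 0` the barrier inequality `v + amax ts / 2 ≤ √A` at the current
state, `A = 2 amax (ymax - y) + amax² ts² / 4`, squared, yields `(v - amax ts / 2)² ≤ A - 2 amax ts v`, which is the barrier inequality at the next state.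
By the symmetry `(y, v) ↦ (-y, -v)` it suffices to brake a positive velocity.
-/

lemma hLK_neg_neg (amax ts ymax y v : ℝ) :
    hLK amax ts ymax (-y) (-v) = hLK amax ts ymax y v := by
  simp [hLK, Real.sign_neg]

lemma hLK_zero_velocity_nonneg {amax ymax : ℝ} (hamax : 0 ≤ amax) (hymax : 0 ≤ ymax)
    (ts y : ℝ) : 0 ≤ hLK amax ts ymax y 0 := by
  have hsq : (1 / 2 * amax * ts) ^ 2 ≤ 2 * amax * (ymax - 0 * y) + 1 / 4 * amax ^ 2 * ts ^ 2 := by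
    nlinarith [mul_nonneg hamax hymax]
  have := (le_abs_self _).trans (Real.abs_le_sqrt hsq)
  simp only [hLK, Real.sign_zero, abs_zero]
  linarith

lemma hLK_brake_nonneg {amax ts ymax y v : ℝ} (hamax : 0 ≤ amax) (hts : 0 ≤ ts)
    (hv : ts * amax < v) (h0 : 0 ≤ hLK amax ts ymax y v) :
    0 ≤ hLK amax ts ymax (y + ts * v) (v + ts * -amax) := by
  have hv₀ : 0 < v := (mul_nonneg hts hamax).trans_lt hv
  have hv₁ : 0 < v + ts * -amax := by linarith
  simp only [hLK, Real.sign_of_pos hv₀, Real.sign_of_pos hv₁, abs_of_pos hv₀,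
    abs_of_pos hv₁] at h0 ⊢
  have hsq : (v + 1 / 2 * amax * ts) ^ 2 ≤ 2 * amax * (ymax - 1 * y) + 1 / 4 * amax ^ 2 * ts ^ 2 :=
    (Real.le_sqrt' (by positivity)).1 (by linarith)
  have hsq' : (v - 1 / 2 * amax * ts) ^ 2
      ≤ 2 * amax * (ymax - 1 * (y + ts * v)) + 1 / 4 * amax ^ 2 * ts ^ 2 := by
    linarith
  have := (le_abs_self _).trans (Real.abs_le_sqrt hsq')
  linarith

/-- One-step controlled invariance of the lane-keeping barrier for the discrete
double integrator: if `hLK amax ts ymax y v ≥ 0`, then there is an admissible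
acceleration `acc` with `|acc| ≤ amax` keeping the barrier nonnegative at the
next step. -/
theorem hLK_one_step_controlled_invariance
    (amax ts ymax : ℝ) (hamax : 0 < amax) (hts : 0 < ts) (hymax : 0 ≤ ymax)
    (y v : ℝ) (h0 : hLK amax ts ymax y v ≥ 0) :
    ∃ acc : ℝ, |acc| ≤ amax ∧ hLK amax ts ymax (y + ts * v) (v + ts * acc) ≥ 0 := by
  rcases le_or_gt |v| (ts * amax) with hslow | hfast
  · refine ⟨-v / ts, ?_, ?_⟩
    · rw [abs_div, abs_neg, abs_of_pos hts, div_le_iff₀ hts]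
      linarith
    · rw [show v + ts * (-v / ts) = 0 by field_simp; ring]
      exact hLK_zero_velocity_nonneg hamax.le hymax _ _
  rcases lt_abs.1 hfast with hpos | hneg
  · exact ⟨-amax, by rw [abs_neg, abs_of_pos hamax], hLK_brake_nonneg hamax.le hts.le hpos h0⟩
  · refine ⟨amax, (abs_of_pos hamax).le, ?_⟩
    have := hLK_brake_nonneg hamax.le hts.le hneg (by rwa [hLK_neg_neg])
    rw [← hLK_neg_neg]
    convert this using 2 <;> ring
end

section
/- Forward controlled invariance of the lane-keeping safe set for the discrete double integrator: Let a_max > 0, t_s > 0, and y_max ≥ 0, and define h(y, v) = √(2·a_max·(y_max − sgn(v)·y) + (1/4)·a_max²·t_s²) − |v| − (1/2)·a_max·t_s, where sgn is the sign function and √ is the real square root (0 on negative arguments). Then the set S = {(y, v) ∈ ℝ² : h(y, v) ≥ 0} is forward controlled invariant for the discrete double integrator dynamics y_{k+1} = y_k + t_s·v_k, v_{k+1} = v_k + t_s·acc_k with input constraint |acc_k| ≤ a_max: for every (y₀, v₀) with h(y₀, v₀) ≥ 0 there exist sequences acc : ℕ → ℝ with |acc_k| ≤ a_max for all k, and (y_k,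 v_k) defined by the recursion from (y₀, v₀), such that h(y_k, v_k) ≥ 0 for all k ∈ ℕ. -/
namespace LaneKeeping

variable {amax ts ymax : ℝ}

theorem hLK_neg_neg (amax ts ymax y v : ℝ) :
    hLK amax ts ymax (-y) (-v) = hLK amax ts ymax y v := by
  simp only [hLK, Real.sign_neg, abs_neg, neg_mul_neg]

theorem hLK_zero_nonneg (ha : 0 ≤ amax) (hymax : 0 ≤ ymax) (y : ℝ) :
    0 ≤ hLK amax ts ymax y 0 := by
  have hsqrt : (1 / 2) * amax * ts ≤ Real.sqrt (2 * amax * ymax + (1 / 4) * amax ^ 2 * ts ^ 2) :=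
    calc (1 / 2) * amax * ts ≤ |(1 / 2) * amax * ts| := le_abs_self _
      _ = Real.sqrt (((1 / 2) * amax * ts) ^ 2) := (Real.sqrt_sq_eq_abs _).symm
      _ ≤ _ := Real.sqrt_le_sqrt (by nlinarith [mul_nonneg ha hymax])
  simpa [hLK] using hsqrt

theorem hLK_nonneg_iff_of_pos (ha : 0 ≤ amax) (hts : 0 ≤ ts) {y v : ℝ} (hv : 0 < v) :
    0 ≤ hLK amax ts ymax y v ↔ v ^ 2 + amax * ts * v ≤ 2 * amax * (ymax - y) := by
  have hpos : 0 < v + (1 / 2) * amax * ts := by positivity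
  rw [hLK, Real.sign_of_pos hv, abs_of_pos hv, sub_sub, sub_nonneg, one_mul,
    Real.le_sqrt' hpos]
  constructor <;> intro h <;> nlinarith

noncomputable def brake (amax ts v : ℝ) : ℝ :=
  -(Real.sign v * min amax (|v| / ts))

theorem brake_neg (amax ts v : ℝ) : brake amax ts (-v) = -brake amax ts v := by
  simp only [brake, Real.sign_neg, abs_neg, neg_mul]

theorem abs_brake_le (ha : 0 ≤ amax) (hts : 0 ≤ ts) (v : ℝ) : |brake amax ts v| ≤ amax := by
  have hmin : |min amax (|v| / ts)| ≤ amax := by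
    rw [abs_of_nonneg (le_min ha (by positivity))]
    exact min_le_left _ _
  rw [brake, abs_neg, abs_mul]
  rcases Real.sign_apply_eq v with h | h | h <;> simp [h, ha, hmin]

noncomputable def brakeStep (amax ts : ℝ) (p : ℝ × ℝ) : ℝ × ℝ :=
  (p.1 + ts * p.2, p.2 + ts * brake amax ts p.2)

theorem brakeStep_neg (amax ts : ℝ) (p : ℝ × ℝ) :
    brakeStep amax ts (-p) = -brakeStep amax ts p := by
  simp only [brakeStep, Prod.fst_neg, Prod.snd_neg, brake_neg, Prod.neg_mk]
  congr 1 <;> ring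

def safeSet (amax ts ymax : ℝ) : Set (ℝ × ℝ) :=
  {p | 0 ≤ hLK amax ts ymax p.1 p.2}

theorem neg_mem_safeSet_iff {p : ℝ × ℝ} :
    -p ∈ safeSet amax ts ymax ↔ p ∈ safeSet amax ts ymax := by
  simp only [safeSet, Set.mem_ofPred_eq, Prod.fst_neg, Prod.snd_neg, hLK_neg_neg]

theorem brakeStep_mem_safeSet_of_pos (ha : 0 ≤ amax) (hts : 0 < ts) (hymax : 0 ≤ ymax)
    {y v : ℝ} (hv : 0 < v) (hsafe : (y, v) ∈ safeSet amax ts ymax) :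
    brakeStep amax ts (y, v) ∈ safeSet amax ts ymax := by
  have hbound := (hLK_nonneg_iff_of_pos ha hts.le hv).1 hsafe
  simp only [safeSet, Set.mem_ofPred_eq, brakeStep, brake, Real.sign_of_pos hv, abs_of_pos hv,
    one_mul]
  rcases le_or_gt amax (v / ts) with hfull | hstop
  · rw [min_eq_left hfull]
    have hv' : 0 ≤ v + ts * -amax := by
      have := (le_div_iff₀ hts).1 hfull
      linarith
    rcases hv'.eq_or_lt with hzero | hpos
    · rw [← hzero]
      exact hLK_zero_nonneg ha hymax _
    · rw [hLK_nonneg_iff_of_pos ha hts.le hpos]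
      linear_combination hbound
  · rw [min_eq_right hstop.le, mul_neg, mul_div_cancel₀ v hts.ne', add_neg_cancel]
    exact hLK_zero_nonneg ha hymax _

theorem mapsTo_brakeStep_safeSet (ha : 0 ≤ amax) (hts : 0 < ts) (hymax : 0 ≤ ymax) :
    Set.MapsTo (brakeStep amax ts) (safeSet amax ts ymax) (safeSet amax ts ymax) := by
  suffices h : ∀ y v, 0 ≤ v → (y, v) ∈ safeSet amax ts ymax →
      brakeStep amax ts (y, v) ∈ safeSet amax ts ymax by
    rintro ⟨y, v⟩ hsafe
    rcases le_or_gt 0 v with hv | hv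
    · exact h y v hv hsafe
    · rw [← neg_mem_safeSet_iff, ← brakeStep_neg]
      exact h (-y) (-v) (by linarith) (neg_mem_safeSet_iff.2 hsafe)
  intro y v hv hsafe
  rcases hv.eq_or_lt with rfl | hv
  · simpa [brakeStep, brake, safeSet] using hLK_zero_nonneg ha hymax y
  · exact brakeStep_mem_safeSet_of_pos ha hts hymax hv hsafe

end LaneKeeping

open LaneKeeping in
/-- Forward controlled invariance of the lane-keeping safe set
`S = {(y, v) : hLK amax ts ymax y v ≥ 0}` for the discrete double integrator
`y_{k+1} = y_k + ts v_k`, `v_{k+1} = v_k + ts acc_k` with `|acc_k| ≤ amax`. -/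
theorem hLK_forward_controlled_invariance
    (amax ts ymax : ℝ) (hamax : 0 < amax) (hts : 0 < ts) (hymax : 0 ≤ ymax)
    (y₀ v₀ : ℝ) (h0 : hLK amax ts ymax y₀ v₀ ≥ 0) :
    ∃ (acc : ℕ → ℝ) (y v : ℕ → ℝ),
      (∀ k, |acc k| ≤ amax) ∧ y 0 = y₀ ∧ v 0 = v₀ ∧
      (∀ k, y (k + 1) = y k + ts * v k) ∧
      (∀ k, v (k + 1) = v k + ts * acc k) ∧
      (∀ k, hLK amax ts ymax (y k) (v k) ≥ 0) := by
  let state : ℕ → ℝ × ℝ := fun k => (brakeStep amax ts)^[k] (y₀, v₀)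
  have hstate : ∀ k, state (k + 1) = brakeStep amax ts (state k) := fun k =>
    Function.iterate_succ_apply' _ k _
  refine ⟨fun k => brake amax ts (state k).2, fun k => (state k).1, fun k => (state k).2,
    fun k => abs_brake_le hamax.le hts.le _, rfl, rfl,
    fun k => congrArg Prod.fst (hstate k), fun k => congrArg Prod.snd (hstate k),
    fun k => (mapsTo_brakeStep_safeSet hamax.le hts hymax).iterate k h0⟩
end
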